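/- arXiv:1806.10896 — 10 statements merged into one kernel-verified Lean document; each statement's English description precedes it below -/
import Mathlib

section
/- For every nonnegative integer n, the sum over k from 0 to n of C_k^2/16^k equals -4 + (5+4n) * binomial(2n+1, n)^2 / 16^n, where C_k is the k-th Catalan number. -/
/-!
Write `b n = (2n+1).choose n`, so that `(n+1).centralBinom = 2 b n`. Then
`C (n+1) = 2 b n / (n+2)` and `b (n+1) = 2 (2n+3) b n / (n+2)`, and the claimed identity
follows by induction: after these substitutions the induction step reduces to the polynomial
identity `4 (4n+5) (n+2)² + 1 = (4n+9) (2n+3)²`.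
-/

namespace Nat

theorem centralBinom_succ_eq_two_mul_choose (n : ℕ) :
    (n + 1).centralBinom = 2 * (2 * n + 1).choose n := by
  rw [centralBinom_eq_two_mul_choose, show 2 * (n + 1) = 2 * n + 1 + 1 by ring,
    choose_succ_succ', choose_symm_half, ← two_mul]

theorem succ_succ_mul_choose_succ (n : ℕ) :
    (n + 2) * (2 * (n + 1) + 1).choose (n + 1) = 2 * (2 * n + 3) * (2 * n + 1).choose n := by
  have h := succ_mul_centralBinom_succ (n + 1)
  rw [centralBinom_succ_eq_two_mul_choose, centralBinom_succ_eq_two_mul_choose] at h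
  linarith

end Nat

theorem succ_succ_mul_catalan_succ (n : ℕ) :
    (n + 2) * catalan (n + 1) = 2 * (2 * n + 1).choose n := by
  rw [← Nat.centralBinom_succ_eq_two_mul_choose]
  exact succ_mul_catalan_eq_centralBinom (n + 1)

theorem catalan_sum_d2 (n : ℕ) :
    ∑ k ∈ Finset.range (n + 1), (catalan k : ℚ) ^ 2 / 16 ^ k
      = -4 + (5 + 4 * (n : ℚ)) * (Nat.choose (2 * n + 1) n : ℚ) ^ 2 / 16 ^ n := by
  induction n with
  | zero => norm_num
  | succ n ih =>
    have hn : (n : ℚ) + 2 ≠ 0 := by positivity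
    have hC : (catalan (n + 1) : ℚ) = 2 * (2 * n + 1).choose n / (n + 2) := by
      rw [eq_div_iff hn, mul_comm]
      exact_mod_cast succ_succ_mul_catalan_succ n
    have hb : ((2 * (n + 1) + 1).choose (n + 1) : ℚ)
        = 2 * (2 * n + 3) * (2 * n + 1).choose n / (n + 2) := by
      rw [eq_div_iff hn, mul_comm]
      exact_mod_cast Nat.succ_succ_mul_choose_succ n
    rw [Finset.sum_range_succ, ih, hC, hb]
    push_cast
    field_simp
    ring
end

section
/- For every prime p > 2, the sum over k from 0 to (p-1)/2 of C_k/4^k is congruent to 2 - 2*(-1)^((p-1)/2) * p modulo p^2 (as a congruence of p-adic integers, since 4 is invertible mod p). -/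
/-!
Write `u = 4⁻¹` and `p = 2n + 1`. The partial sums of the Catalan series telescope,
`∑_{k<N} Cₖ uᵏ = 2 - 2 binom(2N, N) uᴺ`, since `binom(2N+2, N+1) + 2 C_N = 4 binom(2N, N)`.
At `N = n + 1` we have `binom(2N, N) = 2 binom(p, n)`, and `binom(p, n) ≡ 2p(-1)ⁿ (mod p²)`
since `n binom(p, n) = p binom(p-1, n-1)` and `binom(p-1, k) ≡ (-1)ᵏ (mod p)`.
Finally `p uⁿ ≡ p (mod p²)` because `4ⁿ = 2^(p-1) ≡ 1 (mod p)`.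
-/

open Finset

lemma Nat.centralBinom_succ_add_two_mul_catalan (n : ℕ) :
    centralBinom (n + 1) + 2 * catalan n = 4 * centralBinom n := by
  refine Nat.eq_of_mul_eq_mul_left (show 0 < n + 1 by omega) ?_
  rw [mul_add, succ_mul_centralBinom_succ, mul_left_comm, succ_mul_catalan_eq_centralBinom]
  ring

lemma Nat.centralBinom_succ_eq_two_mul_choose_s2 (n : ℕ) :
    centralBinom (n + 1) = 2 * (2 * n + 1).choose n := by
  rw [centralBinom_eq_two_mul_choose, show 2 * (n + 1) = 2 * n + 1 + 1 by ring,
    choose_succ_succ', choose_symm_half]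
  ring

theorem sum_range_catalan_mul_pow {R : Type*} [CommRing R] {u : R} (hu : 4 * u = 1) (n : ℕ) :
    ∑ k ∈ range n, (catalan k : R) * u ^ k = 2 - 2 * Nat.centralBinom n * u ^ n := by
  induction n with
  | zero => norm_num
  | succ n ih =>
    have hrec := congrArg (Nat.cast : ℕ → R) (Nat.centralBinom_succ_add_two_mul_catalan n)
    push_cast at hrec
    rw [sum_range_succ, ih]
    linear_combination (2 * u ^ (n + 1)) * hrec
      + (2 * (n.centralBinom : R) - catalan n) * u ^ n * hu

theorem Nat.Prime.choose_pred_eq_neg_one_pow {p k : ℕ} (hp : p.Prime) (hk : k < p) :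
    ((p - 1).choose k : ZMod p) = (-1) ^ k := by
  induction k with
  | zero => simp
  | succ k ih =>
    have hpascal := Nat.choose_succ_succ' (p - 1) k
    rw [Nat.sub_add_cancel hp.one_le] at hpascal
    have hdvd : (p.choose (k + 1) : ZMod p) = 0 :=
      (ZMod.natCast_eq_zero_iff _ _).mpr (hp.dvd_choose_self k.succ_ne_zero hk)
    rw [hpascal, Nat.cast_add, ih (by omega)] at hdvd
    linear_combination hdvd

theorem Nat.Prime.choose_half_modEq {p n : ℕ} (hp : p.Prime) (hpn : p = 2 * n + 1) :
    (p.choose n : ℤ) ≡ 2 * p * (-1) ^ n [ZMOD p ^ 2] := by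
  obtain ⟨m, rfl⟩ : ∃ m, n = m + 1 :=
    Nat.exists_eq_succ_of_ne_zero (by rintro rfl; norm_num [hpn] at hp)
  have hkey : (p : ℤ) * (p - 1).choose m = p.choose (m + 1) * (m + 1) := by
    have := Nat.add_one_mul_choose_eq (p - 1) m
    rw [Nat.sub_add_cancel hp.one_le] at this
    exact_mod_cast this
  have hpred : ((p - 1).choose m : ℤ) ≡ (-1) ^ m [ZMOD p] := by
    rw [← ZMod.intCast_eq_intCast_iff]
    push_cast
    exact hp.choose_pred_eq_neg_one_pow (by omega)
  have hdvd : (p : ℤ) ∣ p.choose (m + 1) :=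
    Int.natCast_dvd_natCast.mpr (hp.dvd_choose_self m.succ_ne_zero (by omega))
  calc (p.choose (m + 1) : ℤ)
      = p * p.choose (m + 1) - 2 * (p * (p - 1).choose m) := by
        rw [hkey, hpn]; push_cast; ring
    _ ≡ 0 - 2 * (p * (-1) ^ m) [ZMOD p ^ 2] := by
        refine Int.ModEq.sub ?_ (Int.ModEq.mul_left 2 ?_) <;> rw [sq]
        · exact Int.modEq_zero_iff_dvd.mpr (mul_dvd_mul_left _ hdvd)
        · exact hpred.mul_left'
    _ = 2 * p * (-1) ^ (m + 1) := by ring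

theorem Int.natCast_mul_pow_card_sub_one_modEq {p : ℕ} (hp : p.Prime) {a : ℤ}
    (ha : IsCoprime a p) : p * a ^ (p - 1) ≡ p [ZMOD p ^ 2] := by
  simpa [sq] using (Int.ModEq.pow_card_sub_one_eq_one hp ha).mul_left' (c := p)

theorem catalan_sum_mod_p2 (p : ℕ) (hp : p.Prime) (hp2 : 2 < p) :
    ∑ k ∈ Finset.range ((p - 1) / 2 + 1),
        (catalan k : ZMod (p ^ 2)) * ((4 : ZMod (p ^ 2)) ^ k)⁻¹
      = 2 - 2 * (-1) ^ ((p - 1) / 2) * (p : ZMod (p ^ 2)) := by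
  obtain ⟨n, hpn⟩ := hp.odd_of_ne_two hp2.ne'
  rw [show (p - 1) / 2 = n by omega]
  have hcop : Nat.Coprime 2 p := (Nat.coprime_primes Nat.prime_two hp).mpr hp2.ne
  set u := (4 : ZMod (p ^ 2))⁻¹
  have hu : 4 * u = 1 := by
    refine ZMod.mul_inv_of_unit _ ?_
    exact_mod_cast (ZMod.isUnit_iff_coprime 4 (p ^ 2)).mpr (hcop.pow 2 2)
  have hinv (k : ℕ) : ((4 : ZMod (p ^ 2)) ^ k)⁻¹ = u ^ k :=
    ZMod.inv_eq_of_mul_eq_one _ _ _ (by rw [← mul_pow, hu, one_pow])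
  have hchoose : (p.choose n : ZMod (p ^ 2)) = 2 * p * (-1) ^ n := by
    exact_mod_cast (ZMod.intCast_eq_intCast_iff _ _ _).mpr (hp.choose_half_modEq hpn)
  have hfermat : (p : ZMod (p ^ 2)) * 4 ^ n = p := by
    have := Int.natCast_mul_pow_card_sub_one_modEq hp (a := 2)
      (Int.isCoprime_iff_gcd_eq_one.mpr hcop)
    rw [hpn, Nat.add_sub_cancel, pow_mul, ← hpn] at this
    exact_mod_cast (ZMod.intCast_eq_intCast_iff _ _ _).mpr this
  have hpu : (p : ZMod (p ^ 2)) * u ^ n = p := by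
    rw [← hfermat, mul_assoc, ← mul_pow, hu, one_pow, mul_one, hfermat]
  simp only [hinv]
  rw [sum_range_catalan_mul_pow hu, Nat.centralBinom_succ_eq_two_mul_choose_s2, ← hpn]
  push_cast
  rw [hchoose]
  linear_combination (-2 * (-1) ^ n * (p : ZMod (p ^ 2)) * u ^ n) * hu - 2 * (-1) ^ n * hpu
end

section
/- For every prime p > 2, the sum over k from 0 to (p-1)/2 of C_k^2/16^k is congruent to -4 + 12*p^2 modulo p^3. -/
/-!
Telescoping gives `∑_{k<n} C_k² 16^(n-k) + 4·16^n = 4(4n+1) B_n²` with `B_n = (2n choose n)`.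
For `p = 2n - 1` we have `B_n (n!)² = (p+1)! = p (p+1) (p-1)!`, so `B_n²` is `p²` times a number
whose residue mod `p` is all that matters mod `p³`. Wilson's theorem, its half-factorial form
`((n-1)!)² ≡ ±1` and Fermat's little theorem for `2` then give `(4n+1) B_n² ≡ 3 p² 16^n (mod p³)`.
-/

open Finset Nat

theorem ZMod.pow_mul_inv_pow {n : ℕ} {a : ZMod n} (ha : IsUnit a) {k l : ℕ} (h : k ≤ l) :
    a ^ l * (a ^ k)⁻¹ = a ^ (l - k) := by
  obtain ⟨u, rfl⟩ := ha
  rw [← Units.val_pow_eq_pow_val, ← Units.val_pow_eq_pow_val, ZMod.inv_coe_unit, ← Units.val_mul,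
    ← pow_sub u h, Units.val_pow_eq_pow_val]

theorem ZMod.natCast_pow_mul_eq_of_eq {p k x y : ℕ} (h : (x : ZMod p) = y) :
    (p : ZMod (p ^ (k + 1))) ^ k * x = p ^ k * y := by
  obtain ⟨c, hc⟩ := (ZMod.intCast_eq_intCast_iff_dvd_sub x y p).mp (by exact_mod_cast h)
  have hzero : (p : ZMod (p ^ (k + 1))) ^ (k + 1) = 0 := by exact_mod_cast ZMod.natCast_self _
  have hc' : (y - x : ZMod (p ^ (k + 1))) = p * c := by exact_mod_cast congrArg Int.cast hc
  linear_combination (-(p : ZMod (p ^ (k + 1))) ^ k) * hc' - c * hzero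

theorem sum_catalan_sq_mul_sixteen_pow (n : ℕ) :
    ∑ k ∈ range n, catalan k ^ 2 * 16 ^ (n - k) + 4 * 16 ^ n
      = 4 * (4 * n + 1) * centralBinom n ^ 2 := by
  induction n with
  | zero => simp
  | succ n ih =>
    have hshift : ∑ k ∈ range n, catalan k ^ 2 * 16 ^ (n + 1 - k)
        = 16 * ∑ k ∈ range n, catalan k ^ 2 * 16 ^ (n - k) := by
      rw [mul_sum]
      refine sum_congr rfl fun k hk => ?_
      rw [Nat.sub_add_comm (mem_range.mp hk).le, pow_succ]
      ring
    have hcat := succ_mul_catalan_eq_centralBinom n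
    have hbinom := succ_mul_centralBinom_succ n
    rw [sum_range_succ, hshift, Nat.add_sub_cancel_left]
    zify at ih hcat hbinom ⊢
    refine mul_left_cancel₀ (by positivity : ((n : ℤ) + 1) ^ 2 ≠ 0) ?_
    linear_combination 16 * ((n : ℤ) + 1) ^ 2 * ih
      + 16 * (((n : ℤ) + 1) * catalan n + centralBinom n) * hcat
      - 4 * (4 * (n : ℤ) + 5) * (((n : ℤ) + 1) * centralBinom (n + 1)
        + 2 * (2 * n + 1) * centralBinom n) * hbinom

theorem ZMod.factorial_sq_of_eq_two_mul_add_one {p m : ℕ} [Fact p.Prime] (hp : p = 2 * m + 1) :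
    (m ! : ZMod p) ^ 2 = -(-1) ^ m := by
  have hsplit := factorial_mul_descFactorial (show m ≤ 2 * m by omega)
  rw [show 2 * m - m = m by omega] at hsplit
  have hdesc : ((2 * m).descFactorial m : ZMod p) = (-1) ^ m * m ! := by
    simpa [hp] using ZMod.cast_descFactorial (n := m) (p := p) (by omega)
  have hwilson : ((m ! * (2 * m).descFactorial m : ℕ) : ZMod p) = -1 := by
    simpa [hsplit, hp] using ZMod.wilsons_lemma (p := p)
  have hsq : ((-1 : ZMod p) ^ m) ^ 2 = 1 := by rw [← pow_mul, pow_mul', neg_one_sq, one_pow]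
  rw [Nat.cast_mul, hdesc] at hwilson
  linear_combination (-1) ^ m * hwilson - (m ! : ZMod p) ^ 2 * hsq

theorem ZMod.sixteen_pow_mul_factorial_pow_four_of_eq_two_mul_add_one {p m : ℕ} [Fact p.Prime]
    (hp : p = 2 * m + 1) :
    (16 : ZMod p) ^ (m + 1) * ((m + 1)! : ℕ) ^ 4 = 1 := by
  have hhalf : (2 : ZMod p) * (m + 1) = 1 := by
    have hpzero : ((2 * m + 1 : ℕ) : ZMod p) = 0 := hp ▸ ZMod.natCast_self p
    push_cast at hpzero
    linear_combination hpzero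
  have hfermat : (2 : ZMod p) ^ (2 * m) = 1 := by
    simpa [hp] using ZMod.pow_card_sub_one_eq_one (left_ne_zero_of_mul_eq_one hhalf)
  have h16 : (16 : ZMod p) ^ (m + 1) = 2 ^ 4 := by
    rw [show (16 : ZMod p) = 2 ^ 4 by norm_num, ← pow_mul, show 4 * (m + 1) = 2 * m * 2 + 4 by ring,
      pow_add, pow_mul, hfermat, one_pow, one_mul]
  calc (16 : ZMod p) ^ (m + 1) * ((m + 1)! : ℕ) ^ 4
      = (2 * (m + 1)) ^ 4 * ((m ! : ZMod p) ^ 2) ^ 2 := by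
        push_cast [h16, factorial_succ]
        ring
    _ = 1 := by
        rw [hhalf, ZMod.factorial_sq_of_eq_two_mul_add_one hp, neg_sq, ← pow_mul, pow_mul',
          neg_one_sq]
        ring

theorem ZMod.factorial_succ_sq {p : ℕ} [Fact p.Prime] :
    (((p + 1)! : ℕ) : ZMod (p ^ 3)) ^ 2 = p ^ 2 := by
  have hsplit : (p + 1)! = p * ((p + 1) * (p - 1)!) := by
    rw [factorial_succ, ← mul_factorial_pred (Fact.out : p.Prime).ne_zero]
    ring
  have hunit : ((((p + 1) * (p - 1)!) ^ 2 : ℕ) : ZMod p) = ((1 : ℕ) : ZMod p) := by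
    push_cast [ZMod.natCast_self, ZMod.wilsons_lemma]
    ring
  have h := ZMod.natCast_pow_mul_eq_of_eq (k := 2) hunit
  rw [hsplit]
  push_cast at h ⊢
  linear_combination h

theorem ZMod.mul_centralBinom_sq_of_eq_two_mul_add_one {p m : ℕ} [Fact p.Prime]
    (hp : p = 2 * m + 1) :
    ((4 * m + 5) * centralBinom (m + 1) ^ 2 : ZMod (p ^ 3)) = 3 * p ^ 2 * 16 ^ (m + 1) := by
  have hprime : p.Prime := Fact.out
  have hfac : centralBinom (m + 1) * (m + 1)! * (m + 1)! = (p + 1)! := by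
    have h := choose_mul_factorial_mul_factorial (show m + 1 ≤ 2 * (m + 1) by omega)
    rw [show 2 * (m + 1) - (m + 1) = m + 1 by omega, ← centralBinom_eq_two_mul_choose] at h
    rwa [show 2 * (m + 1) = p + 1 by omega] at h
  have hunit : IsUnit (((m + 1)! : ℕ) : ZMod (p ^ 3)) :=
    (ZMod.isUnit_iff_coprime _ _).mpr
      ((hprime.coprime_factorial_of_lt (by have := hprime.two_le; omega)).symm.pow_right 3)
  have hcube : (p : ZMod (p ^ 3)) ^ 3 = 0 := by exact_mod_cast ZMod.natCast_self (p ^ 3)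
  have hmodp : (((16 ^ (m + 1) * (m + 1)! ^ 4 : ℕ)) : ZMod p) = ((1 : ℕ) : ZMod p) := by
    push_cast
    exact ZMod.sixteen_pow_mul_factorial_pow_four_of_eq_two_mul_add_one hp
  have hsixteen := ZMod.natCast_pow_mul_eq_of_eq (k := 2) hmodp
  have hsq := ZMod.factorial_succ_sq (p := p)
  rw [← hfac] at hsq
  have hpm : (p : ZMod (p ^ 3)) = 2 * m + 1 := by exact_mod_cast congrArg Nat.cast hp
  push_cast at hsq hsixteen
  refine (hunit.pow 4).mul_left_cancel ?_
  linear_combination (4 * (m : ZMod (p ^ 3)) + 5) * hsq - 3 * hsixteen + 2 * hcube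
    - 2 * (p : ZMod (p ^ 3)) ^ 2 * hpm

theorem catalan_sq_sum_mod_p3 (p : ℕ) (hp : p.Prime) (hp2 : 2 < p) :
    ∑ k ∈ Finset.range ((p - 1) / 2 + 1),
        (catalan k : ZMod (p ^ 3)) ^ 2 * ((16 : ZMod (p ^ 3)) ^ k)⁻¹
      = -4 + 12 * (p : ZMod (p ^ 3)) ^ 2 := by
  have := Fact.mk hp
  set m := (p - 1) / 2
  have hm : p = 2 * m + 1 := by have := hp.eq_two_or_odd; omega
  have h16 : IsUnit (16 : ZMod (p ^ 3)) := by
    have h : Nat.Coprime (2 ^ 4) (p ^ 3) :=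
      ((Nat.coprime_primes prime_two hp).mpr (by omega)).pow 4 3
    exact_mod_cast (ZMod.isUnit_iff_coprime 16 (p ^ 3)).mpr h
  have hsum := congrArg (Nat.cast : ℕ → ZMod (p ^ 3)) (sum_catalan_sq_mul_sixteen_pow (m + 1))
  push_cast at hsum
  refine (h16.pow (m + 1)).mul_left_cancel ?_
  rw [mul_sum, sum_congr rfl fun k hk => by
    rw [mul_left_comm, ZMod.pow_mul_inv_pow h16 (mem_range.mp hk).le]]
  linear_combination hsum + 4 * ZMod.mul_centralBinom_sq_of_eq_two_mul_add_one hm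
end

section
/- For all nonnegative integers n, k, j with j <= 2k <= 2n, define A(n,k,j) = binomial(n,k)*binomial(n+k,k)*binomial(2k,k+j)*(-4)^(n-k). Then the sum over k from 0 to n of A(n,k,j) equals ((1+(-1)^(n-j))/2) * binomial(n+j, (n+j)/2) * binomial(n-j, (n-j)/2); that is, the sum is 0 if n-j is odd, and equals binomial(n+j,(n+j)/2)*binomial(n-j,(n-j)/2) if n-j is even. -/
/-!
Zeilberger's method. Write `F n k` for the summand. The certificate
`G n k = -2 (2n+3) k (k² - j²) / ((n+k+1)(n+k+2)) · F (n+2) k` satisfies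
`((n+2)² - j²) F (n+2) k - 16 ((n+1)² - j²) F n k = G n (k+1) - G n k`,
a rational-function identity once `F n k` and `F (n+2) (k+1)` are written as multiples of
`F (n+2) k` via the hypergeometric ratios of `F` in `n` and in `k`. Summing over `k` telescopes to
the recurrence `((n+2)² - j²) S (n+2) = 16 ((n+1)² - j²) S n` for the sums. The closed form obeys
the same recurrence because `(m+1) C(2m+2, m+1) = 2 (2m+1) C(2m, m)`, and both agree at
`n = j` and `n = j + 1`.
-/

open Finset

section Choose

variable {R : Type*} [CommRing R]

theorem cast_choose_mul_add_one (m k : ℕ) :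
    (m.choose k : R) * (m + 1) = (m + 1).choose k * ((m : R) + 1 - k) := by
  rcases le_or_gt k (m + 1) with hk | hk
  · have h := congrArg (Nat.cast : ℕ → R) (Nat.choose_mul_succ_eq m k)
    push_cast [Nat.cast_sub hk] at h
    exact h
  · simp [Nat.choose_eq_zero_of_lt hk, Nat.choose_eq_zero_of_lt (show m < k by omega)]

theorem cast_choose_succ_mul (m k : ℕ) :
    (m.choose (k + 1) : R) * (k + 1) = m.choose k * ((m : R) - k) := by
  rcases le_or_gt k m with hk | hk
  · have h := congrArg (Nat.cast : ℕ → R) (Nat.choose_succ_right_eq m k)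
    push_cast [Nat.cast_sub hk] at h
    exact h
  · simp [Nat.choose_eq_zero_of_lt hk, Nat.choose_eq_zero_of_lt (show m < k + 1 by omega)]

theorem cast_choose_mul_add_one_mul_add_two (m i : ℕ) :
    (m.choose i : R) * (m + 1) * (m + 2)
      = (m + 2).choose (i + 1) * (i + 1) * ((m : R) + 1 - i) := by
  have h1 := cast_choose_mul_add_one (R := R) m i
  have h2 := congrArg (Nat.cast : ℕ → R) (Nat.add_one_mul_choose_eq (m + 1) i)
  push_cast at h2
  linear_combination ((m : R) + 2) * h1 + ((m : R) + 1 - i) * h2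

end Choose

def gouldTerm (n j k : ℕ) : ℚ :=
  (n.choose k : ℚ) * ((n + k).choose k : ℚ) * ((2 * k).choose (k + j) : ℚ) * (-4) ^ (n - k)

def gouldSum (n j : ℕ) : ℚ := ∑ k ∈ range (n + 1), gouldTerm n j k

theorem gouldTerm_eq_zero_of_lt {n j k : ℕ} (h : n < k) : gouldTerm n j k = 0 := by
  simp [gouldTerm, Nat.choose_eq_zero_of_lt h]

theorem gouldTerm_eq_zero_of_lt_shift {n j k : ℕ} (h : k < j) : gouldTerm n j k = 0 := by
  simp [gouldTerm, Nat.choose_eq_zero_of_lt (show 2 * k < k + j by omega)]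

theorem gouldTerm_succ_left (n j k : ℕ) :
    ((n : ℚ) + 1 - k) * gouldTerm (n + 1) j k = -4 * (n + k + 1) * gouldTerm n j k := by
  have h1 := cast_choose_mul_add_one (R := ℚ) n k
  have h2 := cast_choose_mul_add_one (R := ℚ) (n + k) k
  rcases le_or_gt k n with hk | hk
  · have hp : (-4 : ℚ) ^ (n + 1 - k) = -4 * (-4) ^ (n - k) := by
      rw [Nat.sub_add_comm hk, pow_succ]; ring
    push_cast at h2
    rw [show n + k + 1 = n + 1 + k by ring] at h2
    simp only [gouldTerm, hp]
    linear_combination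
      (4 * ((2 * k).choose (k + j) : ℚ) * (-4) ^ (n - k) * ((n + 1 + k).choose k : ℚ)) * h1
      + (4 * ((2 * k).choose (k + j) : ℚ) * (-4) ^ (n - k) * (n.choose k : ℚ)) * h2
  · have h0 : (n.choose k : ℚ) = 0 := by simp [Nat.choose_eq_zero_of_lt hk]
    rw [h0, zero_mul] at h1
    simp only [gouldTerm, h0]
    linear_combination
      (-((n + 1 + k).choose k : ℚ) * ((2 * k).choose (k + j) : ℚ) * (-4) ^ (n + 1 - k)) * h1

theorem gouldTerm_add_two_left (n j k : ℕ) :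
    ((n : ℚ) + 2 - k) * ((n : ℚ) + 1 - k) * gouldTerm (n + 2) j k
      = 16 * (n + k + 2) * (n + k + 1) * gouldTerm n j k := by
  have ha := gouldTerm_succ_left (n + 1) j k
  have hb := gouldTerm_succ_left n j k
  push_cast at ha
  linear_combination ((n : ℚ) + 1 - k) * ha + (-4 * ((n : ℚ) + k + 2)) * hb

theorem gouldTerm_succ_right (m j k : ℕ) :
    -2 * ((k : ℚ) + 1) * ((k : ℚ) + 1 + j) * ((k : ℚ) + 1 - j) * gouldTerm m j (k + 1)
      = ((m : ℚ) - k) * (m + k + 1) * (2 * k + 1) * gouldTerm m j k := by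
  refine mul_left_cancel₀ (show 2 * ((k : ℚ) + 1) ≠ 0 by positivity) ?_
  have h1 := cast_choose_succ_mul (R := ℚ) m k
  have h2 := congrArg (Nat.cast : ℕ → ℚ) (Nat.add_one_mul_choose_eq (m + k) k)
  have h3 := cast_choose_mul_add_one_mul_add_two (R := ℚ) (2 * k) (k + j)
  push_cast at h2 h3
  rcases lt_or_ge k m with hk | hk
  · have hp : (-4 : ℚ) ^ (m - k) = -4 * (-4) ^ (m - (k + 1)) := by
      rw [← pow_succ', Nat.sub_add_eq, Nat.sub_add_cancel (by omega)]
    simp only [gouldTerm, hp, show m + (k + 1) = m + k + 1 by ring,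
      show 2 * (k + 1) = 2 * k + 2 by ring, show k + 1 + j = k + j + 1 by ring]
    linear_combination
      (-4 * (-4 : ℚ) ^ (m - (k + 1)) * ((m + k + 1).choose (k + 1) : ℚ) * (k + 1)
        * ((2 * k + 2).choose (k + j + 1) : ℚ) * ((k : ℚ) + j + 1) * ((k : ℚ) + 1 - j)) * h1
      + (4 * (-4 : ℚ) ^ (m - (k + 1)) * (m.choose k : ℚ) * ((m : ℚ) - k)
        * ((2 * k + 2).choose (k + j + 1) : ℚ) * ((k : ℚ) + j + 1) * ((k : ℚ) + 1 - j)) * h2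
      + (4 * (-4 : ℚ) ^ (m - (k + 1)) * (m.choose k : ℚ) * ((m : ℚ) - k)
        * ((m : ℚ) + k + 1) * ((m + k).choose k : ℚ)) * h3
  · have h0 : (m.choose (k + 1) : ℚ) = 0 := by
      simp [Nat.choose_eq_zero_of_lt (show m < k + 1 by omega)]
    rw [h0, zero_mul] at h1
    simp only [gouldTerm, h0]
    linear_combination
      (((m : ℚ) + k + 1) * (2 * k + 1) * (2 * k + 2) * ((m + k).choose k : ℚ)
        * ((2 * k).choose (k + j) : ℚ) * (-4) ^ (m - k)) * h1

def gouldCert (n j k : ℕ) : ℚ :=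
  -2 * (2 * n + 3) * k * ((k : ℚ) + j) * ((k : ℚ) - j) / ((n + k + 1) * (n + k + 2))
    * gouldTerm (n + 2) j k

theorem gouldCert_succ (n j k : ℕ) :
    gouldCert n j (k + 1)
      = (2 * n + 3) * ((n : ℚ) + 2 - k) * (2 * k + 1) / (n + k + 2) * gouldTerm (n + 2) j k := by
  have h := gouldTerm_succ_right (n + 2) j k
  push_cast at h
  rw [gouldCert, div_mul_eq_mul_div, div_mul_eq_mul_div,
    div_eq_div_iff (by positivity) (by positivity)]
  push_cast
  linear_combination (2 * (n : ℚ) + 3) * (n + k + 2) * h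

theorem gouldCert_succ_sub (n j k : ℕ) :
    (((n : ℚ) + 2) ^ 2 - j ^ 2) * gouldTerm (n + 2) j k
      - 16 * (((n : ℚ) + 1) ^ 2 - j ^ 2) * gouldTerm n j k
      = gouldCert n j (k + 1) - gouldCert n j k := by
  have hF : gouldTerm n j k
      = ((n : ℚ) + 2 - k) * ((n : ℚ) + 1 - k) / (16 * (n + k + 2) * (n + k + 1))
        * gouldTerm (n + 2) j k := by
    rw [div_mul_eq_mul_div, eq_div_iff (by positivity)]
    linear_combination -(gouldTerm_add_two_left n j k)
  rw [gouldCert_succ, hF, gouldCert]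
  field_simp
  ring

theorem gouldSum_eq_sum_range {n N : ℕ} (j : ℕ) (h : n < N) :
    gouldSum n j = ∑ k ∈ range N, gouldTerm n j k :=
  sum_subset (range_subset_range.2 h) fun _ _ hk ↦
    gouldTerm_eq_zero_of_lt (by simpa using hk)

theorem gouldSum_recurrence (n j : ℕ) :
    (((n : ℚ) + 2) ^ 2 - j ^ 2) * gouldSum (n + 2) j
      = 16 * (((n : ℚ) + 1) ^ 2 - j ^ 2) * gouldSum n j := by
  have htel := sum_range_sub (gouldCert n j) (n + 3)
  simp only [← gouldCert_succ_sub, sum_sub_distrib, ← mul_sum] at htel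
  have htop : gouldCert n j (n + 3) = 0 := by
    simp [gouldCert, gouldTerm_eq_zero_of_lt (show n + 2 < n + 3 by omega)]
  have hbot : gouldCert n j 0 = 0 := by simp [gouldCert]
  rw [htop, hbot, sub_zero, sub_eq_zero] at htel
  rwa [gouldSum_eq_sum_range j (show n < n + 3 by omega)]

theorem gouldSum_self (j : ℕ) : gouldSum j j = j.centralBinom := by
  rw [gouldSum, sum_eq_single_of_mem j (self_mem_range_succ j)
    fun k hk hkj ↦ gouldTerm_eq_zero_of_lt_shift (by simp at hk; omega)]
  simp [gouldTerm, Nat.centralBinom_eq_two_mul_choose, two_mul]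

-- For `j ≥ 1` this is the recurrence at `n = j - 1`, whose right-hand side vanishes.
theorem gouldSum_succ_self (j : ℕ) : gouldSum (j + 1) j = 0 := by
  rcases j with _ | i
  · norm_num [gouldSum, gouldTerm, sum_range_succ]
  · have h := gouldSum_recurrence i (i + 1)
    push_cast at h
    rw [show i + 2 = i + 1 + 1 by ring] at h
    have h' : (2 * (i : ℚ) + 3) * gouldSum (i + 1 + 1) (i + 1) = 0 := by linear_combination h
    exact (mul_eq_zero.1 h').resolve_left (by positivity)

theorem gouldSum_add_two (j d : ℕ) :
    ((d : ℚ) + 2) * (2 * j + d + 2) * gouldSum (j + d + 2) j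
      = 16 * ((d : ℚ) + 1) * (2 * j + d + 1) * gouldSum (j + d) j := by
  have h := gouldSum_recurrence (j + d) j
  push_cast at h
  linear_combination h

theorem gouldSum_add_two_mul (j u : ℕ) :
    gouldSum (j + 2 * u) j = (j + u).centralBinom * u.centralBinom := by
  induction u with
  | zero => simpa using gouldSum_self j
  | succ u ih =>
    have h := gouldSum_add_two j (2 * u)
    have ha := congrArg (Nat.cast : ℕ → ℚ) (Nat.succ_mul_centralBinom_succ (j + u))
    have hb := congrArg (Nat.cast : ℕ → ℚ) (Nat.succ_mul_centralBinom_succ u)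
    rw [ih] at h
    push_cast at h ha hb
    refine mul_left_cancel₀ (show (2 * (u : ℚ) + 2) * (2 * j + 2 * u + 2) ≠ 0 by positivity) ?_
    rw [show j + 2 * (u + 1) = j + 2 * u + 2 by ring, h, show j + (u + 1) = j + u + 1 by ring]
    linear_combination (-4 * ((u : ℚ) + 1) * ((u + 1).centralBinom : ℚ)) * ha
      + (-8 * (2 * ((j : ℚ) + u) + 1) * ((j + u).centralBinom : ℚ)) * hb

theorem gouldSum_add_two_mul_add_one (j u : ℕ) : gouldSum (j + (2 * u + 1)) j = 0 := by
  induction u with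
  | zero => exact gouldSum_succ_self j
  | succ u ih =>
    have h := gouldSum_add_two j (2 * u + 1)
    rw [ih, mul_zero] at h
    rw [show j + (2 * (u + 1) + 1) = j + (2 * u + 1) + 2 by ring]
    exact (mul_eq_zero.1 h).resolve_left (by positivity)

theorem gould_6_34 (n j : ℕ) (hj : j ≤ n) :
    ∑ k ∈ Finset.range (n + 1),
        (Nat.choose n k : ℤ) * (Nat.choose (n + k) k : ℤ)
          * (Nat.choose (2 * k) (k + j) : ℤ) * (-4) ^ (n - k)
      = if (n - j) % 2 = 0 then
          (Nat.choose (n + j) ((n + j) / 2) : ℤ) * (Nat.choose (n - j) ((n - j) / 2) : ℤ)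
        else 0 := by
  rw [← Int.cast_inj (α := ℚ)]
  push_cast
  change gouldSum n j = _
  obtain ⟨d, rfl⟩ := Nat.exists_eq_add_of_le hj
  rw [Nat.add_sub_cancel_left]
  rcases Nat.even_or_odd' d with ⟨u, rfl | rfl⟩
  · rw [if_pos (by omega), gouldSum_add_two_mul, show (j + 2 * u + j) / 2 = j + u by omega,
      show j + 2 * u + j = 2 * (j + u) by ring, show 2 * u / 2 = u by omega,
      Nat.centralBinom_eq_two_mul_choose, Nat.centralBinom_eq_two_mul_choose]
  · rw [if_neg (by omega), gouldSum_add_two_mul_add_one]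
end

section
/- For every even nonnegative integer n, the sum over k from 0 to n of binomial(n,k)*binomial(n+k,k)*binomial(2k,k) / ((-4)^k * (k+1)) equals binomial(n, n/2)^2 / 16^(n/2) (as rational numbers). -/
/-!
Creative telescoping (Zeilberger). With `F n k` the summand, the certificate `G n k` satisfies
`(n+2)(n+3) F(n+2,k) - (2n+3) F(n+1,k) - n(n+1) F(n,k) = G(n,k+1) - G(n,k)`, so summing over
`k` shows that `S n = ∑ₖ F n k` obeys `(n+2)(n+3) S(n+2) = (2n+3) S(n+1) + n(n+1) S(n)`.
Writing `c m = C(2m,m)/4^m`, the sequence `c 0 ^ 2, c 0 * c 1, c 1 ^ 2, c 1 * c 2, …` satisfies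
the same recurrence, because `2(m+1) c(m+1) = (2m+1) c m`, and has the same initial values.
-/

section CastChoose

variable {R : Type*} [CommRing R]

theorem Nat.cast_choose_mul_succ (n k : ℕ) :
    (n.choose k : R) * (n + 1) = (n + 1).choose k * (n + 1 - k) := by
  rcases le_or_gt k (n + 1) with hk | hk
  · simpa [Nat.cast_sub hk] using congrArg (Nat.cast (R := R)) (Nat.choose_mul_succ_eq n k)
  · simp [Nat.choose_eq_zero_of_lt hk, Nat.choose_eq_zero_of_lt (Nat.lt_of_succ_lt hk)]

theorem Nat.cast_choose_succ_right_mul (n k : ℕ) :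
    (n.choose (k + 1) : R) * (k + 1) = n.choose k * (n - k) := by
  rcases le_or_gt k n with hk | hk
  · simpa [Nat.cast_sub hk] using congrArg (Nat.cast (R := R)) (Nat.choose_succ_right_eq n k)
  · simp [Nat.choose_eq_zero_of_lt hk, Nat.choose_eq_zero_of_lt (Nat.lt_succ_of_lt hk)]

end CastChoose

def summand (n k : ℕ) : ℚ :=
  (n.choose k * (n + k).choose k * (2 * k).choose k : ℚ) / ((-4) ^ k * (k + 1))

def certificate (n k : ℕ) : ℚ :=
  -2 * (2 * n + 3) * k ^ 2 * ((n + 2).choose k * (n + k).choose k * (2 * k).choose k : ℚ) /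
    ((-4) ^ k * (n + 1) * (n + 2))

theorem summand_telescope (n k : ℕ) :
    (n + 2) * (n + 3) * summand (n + 2) k - (2 * n + 3) * summand (n + 1) k
        - n * (n + 1) * summand n k = certificate n (k + 1) - certificate n k := by
  have hn1 : (n + 1 : ℚ) ≠ 0 := by positivity
  have hn2 : (n + 2 : ℚ) ≠ 0 := by positivity
  have hk1 : (k + 1 : ℚ) ≠ 0 := by positivity
  -- Every binomial coefficient is a rational multiple of `C(n+2,k) C(n+k,k) C(2k,k)`; the
  -- multiplicative forms of these relations also hold when `k > n`, so no case split is needed.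
  have e1 : ((n + 1).choose k : ℚ) = (n + 2).choose k * (n + 2 - k) / (n + 2) := by
    rw [eq_div_iff hn2]
    linear_combination (norm := (push_cast; ring)) Nat.cast_choose_mul_succ (R := ℚ) (n + 1) k
  have e0 : (n.choose k : ℚ) = (n + 1).choose k * (n + 1 - k) / (n + 1) := by
    rw [eq_div_iff hn1]
    linear_combination (norm := (push_cast; ring)) Nat.cast_choose_mul_succ (R := ℚ) n k
  have f1 : ((n + k + 1).choose k : ℚ) = (n + k).choose k * (n + k + 1) / (n + 1) := by
    rw [eq_div_iff hn1]
    linear_combination (norm := (push_cast; ring))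
      (Nat.cast_choose_mul_succ (R := ℚ) (n + k) k).symm
  have f2 : ((n + k + 2).choose k : ℚ) = (n + k + 1).choose k * (n + k + 2) / (n + 2) := by
    rw [eq_div_iff hn2]
    linear_combination (norm := (push_cast; ring))
      (Nat.cast_choose_mul_succ (R := ℚ) (n + k + 1) k).symm
  have g1 : ((n + 2).choose (k + 1) : ℚ) = (n + 2).choose k * (n + 2 - k) / (k + 1) := by
    rw [eq_div_iff hk1]
    linear_combination (norm := (push_cast; ring))
      Nat.cast_choose_succ_right_mul (R := ℚ) (n + 2) k
  have g2 : ((n + (k + 1)).choose (k + 1) : ℚ) = (n + k).choose k * (n + k + 1) / (k + 1) := by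
    rw [eq_div_iff hk1, ← add_assoc]
    exact_mod_cast (Nat.add_one_mul_choose_eq (n + k) k).symm.trans (mul_comm _ _)
  have g3 :
      ((2 * (k + 1)).choose (k + 1) : ℚ) = (2 * k).choose k * (2 * (2 * k + 1)) / (k + 1) := by
    rw [eq_div_iff hk1, ← Nat.centralBinom_eq_two_mul_choose,
      ← Nat.centralBinom_eq_two_mul_choose]
    exact_mod_cast (mul_comm _ _).trans ((Nat.succ_mul_centralBinom_succ k).trans (mul_comm _ _))
  simp only [summand, certificate, show n + 2 + k = n + k + 2 by ring,
    show n + 1 + k = n + k + 1 by ring]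
  rw [e0, e1, f2, f1, g1, g2, g3]
  push_cast
  field_simp
  ring

theorem summand_eq_zero_of_lt {n k : ℕ} (h : n < k) : summand n k = 0 := by
  simp [summand, Nat.choose_eq_zero_of_lt h]

theorem certificate_eq_zero_of_lt {n k : ℕ} (h : n + 2 < k) : certificate n k = 0 := by
  simp [certificate, Nat.choose_eq_zero_of_lt h]

def binomSum (n : ℕ) : ℚ := ∑ k ∈ Finset.range (n + 1), summand n k

theorem binomSum_eq_sum_range {n N : ℕ} (h : n < N) :
    binomSum n = ∑ k ∈ Finset.range N, summand n k :=
  Finset.sum_subset (Finset.range_subset_range.mpr h) fun _ _ hk ↦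
    summand_eq_zero_of_lt (by simpa using hk)

theorem binomSum_recurrence (n : ℕ) :
    (n + 2) * (n + 3) * binomSum (n + 2)
      = (2 * n + 3) * binomSum (n + 1) + n * (n + 1) * binomSum n := by
  have htel := Finset.sum_range_sub (certificate n) (n + 3)
  rw [certificate_eq_zero_of_lt (by omega), show certificate n 0 = 0 by simp [certificate]]
    at htel
  simp only [← summand_telescope, Finset.sum_sub_distrib, ← Finset.mul_sum] at htel
  rw [binomSum_eq_sum_range (N := n + 3) (by omega),
    binomSum_eq_sum_range (N := n + 3) (by omega), binomSum_eq_sum_range (N := n + 3) (by omega)]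
  linear_combination htel

def scaledCentralBinom (m : ℕ) : ℚ := m.centralBinom / 4 ^ m

theorem scaledCentralBinom_succ (m : ℕ) :
    2 * (m + 1) * scaledCentralBinom (m + 1) = (2 * m + 1) * scaledCentralBinom m := by
  have h : ((m + 1) * (m + 1).centralBinom : ℚ) = 2 * (2 * m + 1) * m.centralBinom := by
    exact_mod_cast Nat.succ_mul_centralBinom_succ m
  simp only [scaledCentralBinom, pow_succ]
  field_simp
  linear_combination 2 * h

theorem binomSum_two_mul (m : ℕ) :
    binomSum (2 * m) = scaledCentralBinom m ^ 2
      ∧ binomSum (2 * m + 1) = scaledCentralBinom m * scaledCentralBinom (m + 1) := by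
  induction m with
  | zero =>
    norm_num [binomSum, summand, scaledCentralBinom, Finset.sum_range_succ,
      Nat.centralBinom_eq_two_mul_choose]
  | succ m ih =>
    obtain ⟨hev, hodd⟩ := ih
    set c := scaledCentralBinom
    have hc := scaledCentralBinom_succ m
    have hc' := scaledCentralBinom_succ (m + 1)
    have rev := binomSum_recurrence (2 * m)
    have rodd := binomSum_recurrence (2 * m + 1)
    push_cast at rev rodd hc'
    have hev' : binomSum (2 * m + 2) = c (m + 1) ^ 2 := by
      refine mul_left_cancel₀ (by positivity : ((2 * m + 2) * (2 * m + 3) : ℚ) ≠ 0) ?_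
      rw [hev, hodd] at rev
      linear_combination rev - ((2 * m + 3) * c (m + 1) + 2 * m * c m) * hc
    refine ⟨hev', ?_⟩
    refine mul_left_cancel₀ (by positivity : ((2 * m + 3) * (2 * m + 4) : ℚ) ≠ 0) ?_
    rw [hodd, hev'] at rodd
    linear_combination rodd - (2 * m + 2) * c (m + 1) * hc - (2 * m + 3) * c (m + 1) * hc'

theorem id1_even (n : ℕ) (hn : Even n) :
    ∑ k ∈ Finset.range (n + 1),
        (Nat.choose n k * Nat.choose (n + k) k * Nat.choose (2 * k) k : ℚ)
          / ((-4) ^ k * (k + 1))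
      = (Nat.choose n (n / 2) : ℚ) ^ 2 / 16 ^ (n / 2) := by
  obtain ⟨m, rfl⟩ := hn
  rw [← two_mul, Nat.mul_div_cancel_left m two_pos, ← Nat.centralBinom_eq_two_mul_choose,
    show (16 : ℚ) ^ m = (4 ^ m) ^ 2 by rw [← pow_mul, mul_comm, pow_mul]; norm_num, ← div_pow]
  exact (binomSum_two_mul m).1
end

section
/- For every odd positive integer n, the sum over k from 0 to n of binomial(n,k)*binomial(n+k,k)*binomial(2k,k) / ((-4)^k * (k+1)^2) equals ((2n^2+2n-1)/(n+1)^2) * binomial(n-1,(n-1)/2)^2 / 16^((n-1)/2) (as rational numbers). -/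
/-!
Creative telescoping: with `F(n, k)` the summand and Zeilberger's certificate `G(n, k)`,
`(n+3)² F(n+2, k) - (4n+6) F(n+1, k) - n² F(n, k) = G(n, k+1) - G(n, k)`, so the sums
`S(n)` satisfy `(n+3)² S(n+2) = (4n+6) S(n+1) + n² S(n)`. The closed forms of `S(2m+1)` and
`S(2m+2)` are then checked together by induction on `m`, using
`(m+1) C(2m+2, m+1) = 2(2m+1) C(2m, m)`.
-/

open Finset

theorem Nat.cast_choose_mul_succ_eq {R : Type*} [Ring R] (n k : ℕ) :
    (n.choose k : R) * (n + 1) = ((n + 1).choose k : R) * (n + 1 - k) := by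
  rcases le_or_gt k (n + 1) with hk | hk
  · have h : ((n.choose k * (n + 1) : ℕ) : R) = ((n + 1).choose k * (n + 1 - k) : ℕ) :=
      congrArg _ (Nat.choose_mul_succ_eq n k)
    push_cast [hk] at h
    exact h
  · simp [Nat.choose_eq_zero_of_lt hk, Nat.choose_eq_zero_of_lt (n.lt_succ_self.trans hk)]

theorem Nat.cast_choose_succ_right_eq {R : Type*} [Ring R] (n k : ℕ) :
    (n.choose (k + 1) : R) * (k + 1) = (n.choose k : R) * (n - k) := by
  rcases le_or_gt k n with hk | hk
  · have h : ((n.choose (k + 1) * (k + 1) : ℕ) : R) = (n.choose k * (n - k) : ℕ) :=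
      congrArg _ (Nat.choose_succ_right_eq n k)
    push_cast [hk] at h
    exact h
  · simp [Nat.choose_eq_zero_of_lt hk, Nat.choose_eq_zero_of_lt (hk.trans k.lt_succ_self)]

theorem Nat.succ_add_choose_mul (n k : ℕ) :
    (n + 1 + k).choose k * (n + 1) = (n + k).choose k * (n + k + 1) := by
  rw [Nat.choose_mul_succ_eq, show n + k + 1 - k = n + 1 by omega, Nat.add_right_comm n 1 k]

theorem Nat.cast_choose_two_mul_succ {K : Type*} [Field K] [CharZero K] (m : ℕ) :
    ((2 * (m + 1)).choose (m + 1) : K) = 2 * (2 * m + 1) * (2 * m).choose m / (m + 1) := by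
  rw [eq_div_iff (Nat.cast_add_one_ne_zero m), mul_comm]
  exact_mod_cast Nat.succ_mul_centralBinom_succ m

namespace Id2

def summand (n k : ℕ) : ℚ :=
  (n.choose k * (n + k).choose k * (2 * k).choose k : ℚ) / ((-4) ^ k * (k + 1) ^ 2)

def cert (n k : ℕ) : ℚ :=
  -2 * (2 * n + 3) / ((n + 1) * (n + 2)) * k * (n + 2).choose k * (n + k).choose k
    * (2 * k).choose k / (-4) ^ k

theorem summand_recurrence_eq_cert_sub (n k : ℕ) :
    (n + 3 : ℚ) ^ 2 * summand (n + 2) k - (4 * n + 6) * summand (n + 1) k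
        - (n : ℚ) ^ 2 * summand n k = cert n (k + 1) - cert n k := by
  have hn1 : (n + 1 : ℚ) ≠ 0 := by positivity
  have hn2 : (n + 2 : ℚ) ≠ 0 := by positivity
  have hk1 : (k + 1 : ℚ) ≠ 0 := by positivity
  have c₀ : (n.choose k : ℚ) = (n + 1).choose k * (n + 1 - k) / (n + 1) := by
    rw [eq_div_iff hn1, Nat.cast_choose_mul_succ_eq]
  have c₁ : ((n + 1).choose k : ℚ) = (n + 2).choose k * (n + 2 - k) / (n + 2) := by
    rw [eq_div_iff hn2]; exact_mod_cast Nat.cast_choose_mul_succ_eq (R := ℚ) (n + 1) k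
  have b₁ : ((n + 1 + k).choose k : ℚ) = (n + k).choose k * (n + k + 1) / (n + 1) := by
    rw [eq_div_iff hn1]; exact_mod_cast Nat.succ_add_choose_mul n k
  have b₂ : ((n + 2 + k).choose k : ℚ) = (n + 1 + k).choose k * (n + 1 + k + 1) / (n + 2) := by
    rw [eq_div_iff hn2]; exact_mod_cast Nat.succ_add_choose_mul (n + 1) k
  have a₃ : ((n + 2).choose (k + 1) : ℚ) = (n + 2).choose k * (n + 2 - k) / (k + 1) := by
    rw [eq_div_iff hk1]; exact_mod_cast Nat.cast_choose_succ_right_eq (R := ℚ) (n + 2) k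
  have b₃ : ((n + (k + 1)).choose (k + 1) : ℚ) = (n + k).choose k * (n + k + 1) / (k + 1) := by
    rw [eq_div_iff hk1, ← add_assoc]
    exact_mod_cast (Nat.add_one_mul_choose_eq (n + k) k).symm.trans (mul_comm _ _)
  -- every binomial is a rational multiple of `C(n+2, k)`, `C(n+k, k)` or `C(2k, k)`, even where
  -- these vanish, so the identity reduces to one between rational functions
  simp only [summand, cert]
  rw [c₀, c₁, b₂, b₁, a₃, b₃, Nat.cast_choose_two_mul_succ]
  push_cast
  field_simp
  ring

def sumTo (n : ℕ) : ℚ := ∑ k ∈ range (n + 1), summand n k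

theorem summand_eq_zero_of_lt {n k : ℕ} (h : n < k) : summand n k = 0 := by
  simp [summand, Nat.choose_eq_zero_of_lt h]

theorem sumTo_eq_sum_range {n N : ℕ} (h : n < N) : sumTo n = ∑ k ∈ range N, summand n k :=
  sum_subset (range_subset_range.mpr h) fun k _ hk ↦
    summand_eq_zero_of_lt (by simpa using hk)

theorem sumTo_recurrence (n : ℕ) :
    (n + 3 : ℚ) ^ 2 * sumTo (n + 2) = (4 * n + 6) * sumTo (n + 1) + (n : ℚ) ^ 2 * sumTo n := by
  have htel : ∑ k ∈ range (n + 3), (cert n (k + 1) - cert n k) = 0 := by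
    rw [sum_range_sub]
    simp [cert]
  simp only [← summand_recurrence_eq_cert_sub, sum_sub_distrib, ← mul_sum,
    ← sumTo_eq_sum_range (show n < n + 3 by omega),
    ← sumTo_eq_sum_range (show n + 1 < n + 3 by omega),
    ← sumTo_eq_sum_range (show n + 2 < n + 3 by omega)] at htel
  linarith

theorem cast_choose_two_mul_succ_sq (m : ℕ) :
    ((2 * (m + 1)).choose (m + 1) : ℚ) ^ 2 / 16 ^ (m + 1)
      = (2 * m + 1) ^ 2 / (2 * m + 2) ^ 2 * (((2 * m).choose m : ℚ) ^ 2 / 16 ^ m) := by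
  rw [Nat.cast_choose_two_mul_succ, pow_succ]
  field_simp
  ring

theorem sumTo_odd_even (m : ℕ) :
    sumTo (2 * m + 1)
        = (8 * m ^ 2 + 12 * m + 3) / (2 * m + 2) ^ 2 * (((2 * m).choose m : ℚ) ^ 2 / 16 ^ m) ∧
      sumTo (2 * m + 2) = 2 * (((2 * (m + 1)).choose (m + 1) : ℚ) ^ 2 / 16 ^ (m + 1)) := by
  induction m with
  | zero => norm_num [sumTo, summand, sum_range_succ, Nat.choose]
  | succ m ih =>
    obtain ⟨h₁, h₂⟩ := ih
    have r₁ := sumTo_recurrence (2 * m + 1)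
    have r₂ := sumTo_recurrence (2 * m + 2)
    rw [show 2 * m + 1 + 2 = 2 * (m + 1) + 1 by ring, show 2 * m + 1 + 1 = 2 * m + 2 by ring,
      h₁, h₂] at r₁
    rw [show 2 * m + 2 + 2 = 2 * (m + 1) + 2 by ring, show 2 * m + 2 + 1 = 2 * (m + 1) + 1 by ring,
      h₂] at r₂
    push_cast at r₁ r₂ ⊢
    have h₃ : sumTo (2 * (m + 1) + 1)
        = (8 * (m + 1) ^ 2 + 12 * (m + 1) + 3) / (2 * (m + 1) + 2) ^ 2
          * (((2 * (m + 1)).choose (m + 1) : ℚ) ^ 2 / 16 ^ (m + 1)) := by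
      apply mul_left_cancel₀ (show (2 * m + 1 + 3 : ℚ) ^ 2 ≠ 0 by positivity)
      rw [r₁, cast_choose_two_mul_succ_sq m]
      field_simp
      ring
    refine ⟨h₃, ?_⟩
    apply mul_left_cancel₀ (show (2 * m + 2 + 3 : ℚ) ^ 2 ≠ 0 by positivity)
    rw [r₂, h₃, cast_choose_two_mul_succ_sq (m + 1)]
    push_cast
    field_simp
    ring

end Id2

theorem id2_odd_general (n : ℕ) (hn : Odd n) :
    ∑ k ∈ Finset.range (n + 1),
        (Nat.choose n k * Nat.choose (n + k) k * Nat.choose (2 * k) k : ℚ)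
          / ((-4) ^ k * (k + 1) ^ 2)
      = ((2 * (n : ℚ) ^ 2 + 2 * n - 1) / (n + 1) ^ 2)
          * (Nat.choose (n - 1) ((n - 1) / 2) : ℚ) ^ 2 / 16 ^ ((n - 1) / 2) := by
  obtain ⟨m, rfl⟩ := hn
  change Id2.sumTo (2 * m + 1) = _
  rw [Nat.add_sub_cancel, Nat.mul_div_cancel_left m two_pos, (Id2.sumTo_odd_even m).1]
  push_cast
  ring

theorem id2_odd (n : ℕ) (hn : Odd n) (hn0 : 0 < n) :
    ∑ k ∈ Finset.range (n + 1),
        (Nat.choose n k * Nat.choose (n + k) k * Nat.choose (2 * k) k : ℚ)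
          / ((-4) ^ k * (k + 1) ^ 2)
      = ((2 * (n : ℚ) ^ 2 + 2 * n - 1) / (n + 1) ^ 2)
          * (Nat.choose (n - 1) ((n - 1) / 2) : ℚ) ^ 2 / 16 ^ ((n - 1) / 2) :=
  id2_odd_general n hn
end

section
/- For every odd positive integer n, the sum over k from 0 to n of k^3 * binomial(n,k)*binomial(n+k,k)*binomial(2k,k) / (-4)^k equals -(n^2*(4n^4+8n^3+3n^2-n+1) / 15) * binomial(n-1,(n-1)/2)^2 / 16^((n-1)/2) (as rational numbers). -/
/-!
Creative telescoping (Zeilberger). With `t n k` the summand and `S n = ∑ₖ t n k`, the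
certificate `R n k = 2 (2n+3) k³ (k-1)³ C(n+2,k) C(n+k,k) C(2k,k) / (-4)^k` satisfies
`(n+1)⁴ t (n+2) k + (2n+3)(3n²+9n+5) t (n+1) k - (n+2)⁴ t n k = R n k - R n (k+1)`,
so summing over `k` gives the same three-term recurrence for `S`. The odd closed form of the
theorem and the even closed form `(n (n+1) (2n+1))² / 15 · C(n, n/2)² / 16^(n/2)` together
satisfy this recurrence (using `(m+1) C(2m+2,m+1) = 2 (2m+1) C(2m,m)`) and agree with `S` at
`n = 0, 1`; as the leading coefficient `(n+1)⁴` never vanishes, induction on `n` concludes.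
-/

open Finset

namespace Id4Odd

section ChooseRatios

variable {K : Type*} [Field K] [CharZero K]

theorem cast_choose_eq_mul_cast_choose_succ (n k : ℕ) :
    (n.choose k : K) = ((n : K) + 1 - k) / (n + 1) * (n + 1).choose k := by
  rw [div_mul_eq_mul_div, eq_div_iff (Nat.cast_add_one_ne_zero _)]
  rcases le_or_gt k (n + 1) with hk | hk
  · have h := congrArg (Nat.cast : ℕ → K) (Nat.choose_mul_succ_eq n k)
    push_cast [Nat.cast_sub hk] at h
    linear_combination h
  · simp [Nat.choose_eq_zero_of_lt hk, Nat.choose_eq_zero_of_lt (by omega : n < k)]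

theorem cast_choose_succ_right_eq (n k : ℕ) :
    (n.choose (k + 1) : K) = ((n : K) - k) / (k + 1) * n.choose k := by
  rw [div_mul_eq_mul_div, eq_div_iff (Nat.cast_add_one_ne_zero _)]
  rcases le_or_gt k n with hk | hk
  · have h := congrArg (Nat.cast : ℕ → K) (Nat.choose_succ_right_eq n k)
    push_cast [Nat.cast_sub hk] at h
    linear_combination h
  · simp [Nat.choose_eq_zero_of_lt hk, Nat.choose_eq_zero_of_lt (by omega : n < k + 1)]

theorem cast_add_succ_choose (n k : ℕ) :
    ((n + 1 + k).choose k : K) = ((n : K) + 1 + k) / (n + 1) * (n + k).choose k := by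
  rw [div_mul_eq_mul_div, eq_div_iff (Nat.cast_add_one_ne_zero _)]
  have h := congrArg (Nat.cast : ℕ → K) (Nat.choose_mul_succ_eq (n + k) k)
  rw [show n + k + 1 = n + 1 + k by ring, Nat.add_sub_cancel] at h
  push_cast at h
  linear_combination -h

theorem cast_add_succ_choose_succ (n k : ℕ) :
    ((n + (k + 1)).choose (k + 1) : K) = ((n : K) + k + 1) / (k + 1) * (n + k).choose k := by
  rw [div_mul_eq_mul_div, eq_div_iff (Nat.cast_add_one_ne_zero _)]
  have h := congrArg (Nat.cast : ℕ → K) (Nat.add_one_mul_choose_eq (n + k) k)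
  rw [show n + k + 1 = n + (k + 1) by ring] at h
  push_cast at h
  linear_combination -h

theorem cast_choose_two_mul_succ (k : ℕ) :
    ((2 * (k + 1)).choose (k + 1) : K) = 2 * (2 * (k : K) + 1) / (k + 1) * (2 * k).choose k := by
  rw [div_mul_eq_mul_div, eq_div_iff (Nat.cast_add_one_ne_zero _)]
  have h := congrArg (Nat.cast : ℕ → K) (Nat.succ_mul_centralBinom_succ k)
  simp only [Nat.centralBinom] at h
  push_cast at h
  linear_combination h

end ChooseRatios

def term (n k : ℕ) : ℚ :=
  (k : ℚ) ^ 3 * (n.choose k * (n + k).choose k * (2 * k).choose k : ℚ) / (-4) ^ k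

def termSum (n : ℕ) : ℚ := ∑ k ∈ range (n + 1), term n k

def recurrence (n : ℕ) (a b c : ℚ) : ℚ :=
  ((n : ℚ) + 1) ^ 4 * c + (2 * (n : ℚ) + 3) * (3 * (n : ℚ) ^ 2 + 9 * n + 5) * b
    - ((n : ℚ) + 2) ^ 4 * a

def cert (n k : ℕ) : ℚ :=
  2 * (2 * (n : ℚ) + 3) * (k : ℚ) ^ 3 * ((k : ℚ) - 1) ^ 3 *
    ((n + 2).choose k * (n + k).choose k * (2 * k).choose k : ℚ) / (-4) ^ k

/- Each binomial is rewritten as a rational multiple of `C(n+2,k) C(n+k,k) C(2k,k)`. The ratio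
identities hold for every `k` (past the support both sides vanish), so no case split on `k` is
needed and the certificate check is a single rational-function identity. -/
theorem recurrence_term (n k : ℕ) :
    recurrence n (term n k) (term (n + 1) k) (term (n + 2) k) = cert n k - cert n (k + 1) := by
  simp only [recurrence, term, cert]
  rw [cast_choose_eq_mul_cast_choose_succ n, cast_choose_eq_mul_cast_choose_succ (n + 1),
    cast_add_succ_choose (n + 1), cast_add_succ_choose n, cast_choose_succ_right_eq,
    cast_add_succ_choose_succ, cast_choose_two_mul_succ, pow_succ]
  have : (n : ℚ) + 1 + 1 ≠ 0 := by positivity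
  push_cast
  field_simp
  ring

theorem term_eq_zero_of_lt {n k : ℕ} (h : n < k) : term n k = 0 := by
  simp [term, Nat.choose_eq_zero_of_lt h]

theorem termSum_eq_sum_range {n N : ℕ} (h : n + 1 ≤ N) :
    termSum n = ∑ k ∈ range N, term n k :=
  sum_subset (range_subset_range.2 h) fun k _ hk ↦
    term_eq_zero_of_lt (by simpa using hk)

theorem recurrence_sum (n : ℕ) (s : Finset ℕ) (f g h : ℕ → ℚ) :
    recurrence n (∑ k ∈ s, f k) (∑ k ∈ s, g k) (∑ k ∈ s, h k)
      = ∑ k ∈ s, recurrence n (f k) (g k) (h k) := by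
  simp only [recurrence, mul_sum, ← sum_add_distrib, ← sum_sub_distrib]

theorem recurrence_termSum (n : ℕ) :
    recurrence n (termSum n) (termSum (n + 1)) (termSum (n + 2)) = 0 := by
  rw [termSum_eq_sum_range (N := n + 3) (by omega), termSum_eq_sum_range (N := n + 3) (by omega),
    termSum_eq_sum_range (N := n + 3) le_rfl]
  simp only [recurrence_sum, recurrence_term]
  rw [sum_range_sub']
  simp [cert]

theorem eq_of_recurrence_eq_zero {n : ℕ} {a b c c' : ℚ} (h : recurrence n a b c = 0)
    (h' : recurrence n a b c' = 0) : c = c' := by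
  have : ((n : ℚ) + 1) ^ 4 ≠ 0 := by positivity
  simp only [recurrence] at h h'
  exact mul_left_cancel₀ this (by linear_combination h - h')

def centralRatio (m : ℕ) : ℚ := ((2 * m).choose m : ℚ) ^ 2 / 16 ^ m

theorem centralRatio_succ (m : ℕ) :
    centralRatio (m + 1) = (2 * (m : ℚ) + 1) ^ 2 / (4 * (m + 1) ^ 2) * centralRatio m := by
  have : (m : ℚ) + 1 ≠ 0 := by positivity
  simp only [centralRatio, cast_choose_two_mul_succ, pow_succ]
  field_simp
  ring

def evenForm (n : ℕ) : ℚ :=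
  ((n : ℚ) * (n + 1) * (2 * n + 1)) ^ 2 / 15 * centralRatio (n / 2)

def oddForm (n : ℕ) : ℚ :=
  -((n : ℚ) ^ 2 * (4 * (n : ℚ) ^ 4 + 8 * (n : ℚ) ^ 3 + 3 * (n : ℚ) ^ 2 - n + 1) / 15) *
    centralRatio (n / 2)

theorem recurrence_evenForm (m : ℕ) :
    recurrence (2 * m) (evenForm (2 * m)) (oddForm (2 * m + 1)) (evenForm (2 * m + 2)) = 0 := by
  simp only [recurrence, evenForm, oddForm, show (2 * m + 2) / 2 = m + 1 by omega,
    show (2 * m + 1) / 2 = m by omega, show 2 * m / 2 = m by omega, centralRatio_succ]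
  have : (m : ℚ) + 1 ≠ 0 := by positivity
  push_cast
  field_simp
  ring

theorem recurrence_oddForm (m : ℕ) :
    recurrence (2 * m + 1) (oddForm (2 * m + 1)) (evenForm (2 * m + 2)) (oddForm (2 * m + 3))
      = 0 := by
  simp only [recurrence, evenForm, oddForm, show (2 * m + 2) / 2 = m + 1 by omega,
    show (2 * m + 1) / 2 = m by omega, show (2 * m + 3) / 2 = m + 1 by omega, centralRatio_succ]
  have : (m : ℚ) + 1 ≠ 0 := by positivity
  push_cast
  field_simp
  ring

theorem termSum_eq_forms (m : ℕ) :
    termSum (2 * m) = evenForm (2 * m) ∧ termSum (2 * m + 1) = oddForm (2 * m + 1) := by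
  induction m with
  | zero =>
    constructor
    · simp [termSum, term, evenForm]
    · norm_num [termSum, term, oddForm, centralRatio, sum_range_succ]
  | succ m ih =>
    obtain ⟨h_even, h_odd⟩ := ih
    have h_even' : termSum (2 * m + 2) = evenForm (2 * m + 2) := by
      refine eq_of_recurrence_eq_zero (recurrence_termSum (2 * m)) ?_
      rw [h_even, h_odd]
      exact recurrence_evenForm m
    refine ⟨h_even', eq_of_recurrence_eq_zero (recurrence_termSum (2 * m + 1)) ?_⟩
    rw [h_odd, h_even']
    exact recurrence_oddForm m

end Id4Odd

theorem id4_odd_general (n : ℕ) (hn : Odd n) :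
    ∑ k ∈ Finset.range (n + 1),
        (k : ℚ) ^ 3 * (Nat.choose n k * Nat.choose (n + k) k * Nat.choose (2 * k) k : ℚ)
          / (-4) ^ k
      = -((n : ℚ) ^ 2 * (4 * (n : ℚ) ^ 4 + 8 * (n : ℚ) ^ 3 + 3 * (n : ℚ) ^ 2 - n + 1) / 15)
          * (Nat.choose (n - 1) ((n - 1) / 2) : ℚ) ^ 2 / 16 ^ ((n - 1) / 2) := by
  obtain ⟨m, rfl⟩ := hn
  have h := (Id4Odd.termSum_eq_forms m).2
  simp only [Id4Odd.termSum, Id4Odd.term, Id4Odd.oddForm, Id4Odd.centralRatio,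
    show (2 * m + 1) / 2 = m by omega] at h
  rw [h, Nat.add_sub_cancel, show 2 * m / 2 = m by omega]
  ring

theorem id4_odd (n : ℕ) (hn : Odd n) (hn0 : 0 < n) :
    ∑ k ∈ Finset.range (n + 1),
        (k : ℚ) ^ 3 * (Nat.choose n k * Nat.choose (n + k) k * Nat.choose (2 * k) k : ℚ)
          / (-4) ^ k
      = -((n : ℚ) ^ 2 * (4 * (n : ℚ) ^ 4 + 8 * (n : ℚ) ^ 3 + 3 * (n : ℚ) ^ 2 - n + 1) / 15)
          * (Nat.choose (n - 1) ((n - 1) / 2) : ℚ) ^ 2 / 16 ^ ((n - 1) / 2) :=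
  id4_odd_general n hn
end

section
/- Let p > 2 be prime and n = (p-1)/2. For every integer k with 0 <= k <= n, we have binomial(n,k)*binomial(n+k,k)*(-1)^k ≡ binomial(2k,k)^2 / 16^k (mod p^2), where 16^(-k) denotes the inverse of 16^k in Z/p^2. -/
/-!
Write `a k = C(n,k) C(n+k,k) (-16)^k` and `c k = C(2k,k)^2`. Both satisfy a first-order recurrence:
`(k+1)^2 a (k+1) = -16 (n-k)(n+k+1) a k` and `(k+1)^2 c (k+1) = 4 (2k+1)^2 c k`. The two factors
differ by `4 (2n+1)^2`, which vanishes modulo `p^2` when `p = 2n+1`; since `k+1 < p` is a unit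
there, `a k = c k` by induction.
-/

open Nat

section

variable {R : Type*} [CommRing R]

theorem isUnit_two_of_sq_eq_zero {x : R} (h : (2 * x + 1) ^ 2 = 0) : IsUnit (2 : R) :=
  .of_mul_eq_one (-(2 * x ^ 2 + 2 * x)) (by linear_combination -h)

theorem cast_choose_mul_choose_add_succ {n k : ℕ} (hk : k ≤ n) :
    ((k : R) + 1) ^ 2 * ((n.choose (k + 1) : R) * (n + (k + 1)).choose (k + 1))
      = ((n : R) - k) * (n + k + 1) * ((n.choose k : R) * (n + k).choose k) := by
  have h₁ := congrArg (Nat.cast : ℕ → R) (choose_succ_right_eq n k)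
  have h₂ := congrArg (Nat.cast : ℕ → R) (add_one_mul_choose_eq (n + k) k)
  push_cast [Nat.cast_sub hk] at h₁ h₂
  rw [← add_assoc]
  linear_combination ((n + k + 1).choose (k + 1) * ((k : R) + 1)) * h₁
    - (n.choose k * ((n : R) - k)) * h₂

theorem cast_centralBinom_succ_sq (k : ℕ) :
    ((k : R) + 1) ^ 2 * ((k + 1).centralBinom : R) ^ 2
      = 4 * (2 * k + 1) ^ 2 * (k.centralBinom : R) ^ 2 := by
  have h := congrArg (Nat.cast : ℕ → R) (succ_mul_centralBinom_succ k)
  push_cast at h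
  linear_combination (((k : R) + 1) * (k + 1).centralBinom + 2 * (2 * k + 1) * k.centralBinom) * h

theorem choose_mul_choose_add_mul_neg_sixteen_pow_eq_centralBinom_sq {n : ℕ}
    (hn : (2 * (n : R) + 1) ^ 2 = 0) :
    ∀ k ≤ n, IsUnit (k ! : R) →
      (n.choose k : R) * (n + k).choose k * (-16) ^ k = (k.centralBinom : R) ^ 2
  | 0, _, _ => by simp
  | k + 1, hk, hunit => by
    rw [factorial_succ, cast_mul, IsUnit.mul_iff] at hunit
    have ih := choose_mul_choose_add_mul_neg_sixteen_pow_eq_centralBinom_sq hn k (by omega) hunit.2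
    have hfactor : -16 * ((n : R) - k) * (n + k + 1) = 4 * (2 * k + 1) ^ 2 := by
      linear_combination -4 * hn
    apply (hunit.1.pow 2).mul_left_cancel
    push_cast
    linear_combination
      (-16 * (-16) ^ k) * cast_choose_mul_choose_add_succ (R := R) (by omega : k ≤ n)
      + (n.choose k * (n + k).choose k * (-16) ^ k) * hfactor + 4 * (2 * k + 1) ^ 2 * ih
      - cast_centralBinom_succ_sq (R := R) k

end

theorem BB_cong (p : ℕ) (hp : p.Prime) (hp2 : 2 < p) (n : ℕ) (hn : n = (p - 1) / 2)
    (k : ℕ) (hk : k ≤ n) :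
    (Nat.choose n k : ZMod (p ^ 2)) * (Nat.choose (n + k) k : ZMod (p ^ 2)) * (-1) ^ k
      = (Nat.choose (2 * k) k : ZMod (p ^ 2)) ^ 2 * ((16 : ZMod (p ^ 2)) ^ k)⁻¹ := by
  have hpn : p = 2 * n + 1 := by
    obtain ⟨m, rfl⟩ := hp.odd_of_ne_two hp2.ne'
    omega
  have hsq : (2 * (n : ZMod (p ^ 2)) + 1) ^ 2 = 0 := by
    rw [show 2 * (n : ZMod (p ^ 2)) + 1 = p by rw [hpn]; push_cast; ring]
    exact_mod_cast ZMod.natCast_self (p ^ 2)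
  have hunit : IsUnit (k ! : ZMod (p ^ 2)) := by
    rw [ZMod.isUnit_natCast_iff_not_dvd_pow hp two_pos, hp.dvd_factorial]
    omega
  have h16 : (16 : ZMod (p ^ 2)) ^ k * ((16 : ZMod (p ^ 2)) ^ k)⁻¹ = 1 := by
    refine ZMod.mul_inv_of_unit _ (IsUnit.pow k ?_)
    convert (isUnit_two_of_sq_eq_zero hsq).pow 4 using 1
    norm_num
  have key := choose_mul_choose_add_mul_neg_sixteen_pow_eq_centralBinom_sq hsq k hk hunit
  rw [neg_pow, centralBinom_eq_two_mul_choose] at key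
  linear_combination ((16 : ZMod (p ^ 2)) ^ k)⁻¹ * key
    - (n.choose k : ZMod (p ^ 2)) * (n + k).choose k * (-1) ^ k * h16
end

section
/- Let p > 2 be prime and n = (p-1)/2. For every integer k with 0 <= k <= n, the product over j from 1 to k of ((2j-1)^2 - p^2) equals (-1)^k * (2k)! * binomial(n,k) * binomial(n+k,k) * 4^k / binomial(2k,k) (as an identity of rational numbers, equivalently binomial(n,k)*binomial(n+k,k)*(-1)^k = binomial(2k,k) * (prod_{j=1}^k ((2j-1)^2 - p^2)) / (4^k * (2k)!)). -/
/-!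
With `p = 2n + 1`, each factor splits as a difference of squares,
`(2j - 1)² - (2n + 1)² = -4 (n + 1 - j)(n + j)`, so the product is
`(-4)^k · n(n-1)⋯(n-k+1) · (n+k)(n+k-1)⋯(n+1)`. Both falling factorials are `k!` times a binomial
coefficient, and `(2k)! / C(2k, k) = k!²`.
-/

open Finset

section CommRing

variable {R : Type*} [CommRing R]

theorem prod_Icc_natCast_add_one_sub (n k : ℕ) :
    ∏ j ∈ Icc 1 k, ((n : R) + 1 - j) = n.descFactorial k := by
  rw [← Ico_add_one_right_eq_Icc, prod_Ico_eq_prod_range, Nat.add_sub_cancel,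
    Nat.descFactorial_eq_prod_range, ← prod_range_natCast_sub]
  refine prod_congr rfl fun i _ => ?_
  push_cast
  ring

theorem prod_Icc_natCast_add (n k : ℕ) :
    ∏ j ∈ Icc 1 k, ((n : R) + j) = (n + k).descFactorial k := by
  rw [← Ico_add_one_right_eq_Icc, prod_Ico_eq_prod_range, Nat.add_sub_cancel,
    Nat.add_descFactorial_eq_ascFactorial, Nat.ascFactorial_eq_prod_range]
  push_cast
  refine prod_congr rfl fun i _ => ?_
  ring

theorem prod_Icc_sq_sub_sq_odd (n k : ℕ) :
    ∏ j ∈ Icc 1 k, ((2 * (j : R) - 1) ^ 2 - (2 * n + 1) ^ 2)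
      = (-4) ^ k * (n.descFactorial k : R) * ((n + k).descFactorial k : R) := by
  have factor (j : R) : (2 * j - 1) ^ 2 - (2 * n + 1) ^ 2 = -4 * ((n + 1 - j) * (n + j)) := by
    ring
  simp_rw [factor, prod_mul_distrib, prod_const, Nat.card_Icc, Nat.add_sub_cancel,
    prod_Icc_natCast_add_one_sub, prod_Icc_natCast_add, mul_assoc]

end CommRing

theorem factorial_two_mul_div_choose {K : Type*} [Field K] [CharZero K] (k : ℕ) :
    ((2 * k).factorial : K) / (2 * k).choose k = k.factorial ^ 2 := by
  have h := Nat.add_choose_mul_factorial_mul_factorial k k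
  rw [← two_mul] at h
  rw [← h]
  have : ((2 * k).choose k : K) ≠ 0 := by exact_mod_cast (Nat.choose_pos (by omega)).ne'
  push_cast
  field_simp

theorem BB_identity_general (p : ℕ) (hp : p.Prime) (hp2 : 2 < p) (n : ℕ) (hn : n = (p - 1) / 2)
    (k : ℕ) :
    ∏ j ∈ Finset.Icc 1 k, ((2 * (j : ℚ) - 1) ^ 2 - (p : ℚ) ^ 2)
      = (-1) ^ k * (Nat.factorial (2 * k) : ℚ) * (Nat.choose n k : ℚ)
          * (Nat.choose (n + k) k : ℚ) * 4 ^ k / (Nat.choose (2 * k) k : ℚ) := by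
  have hp_odd : p % 2 = 1 := hp.eq_two_or_odd.resolve_left hp2.ne'
  obtain rfl : p = 2 * n + 1 := by omega
  calc _ = (-4 : ℚ) ^ k * n.descFactorial k * (n + k).descFactorial k := by
          exact_mod_cast prod_Icc_sq_sub_sq_odd (R := ℚ) n k
    _ = (-1) ^ k * ((2 * k).factorial / (2 * k).choose k) * n.choose k * (n + k).choose k
          * 4 ^ k := by
          rw [factorial_two_mul_div_choose, Nat.descFactorial_eq_factorial_mul_choose,
            Nat.descFactorial_eq_factorial_mul_choose, neg_pow]
          push_cast
          ring
    _ = _ := by ring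

theorem BB_identity (p : ℕ) (hp : p.Prime) (hp2 : 2 < p) (n : ℕ) (hn : n = (p - 1) / 2)
    (k : ℕ) (hk : k ≤ n) :
    ∏ j ∈ Finset.Icc 1 k, ((2 * (j : ℚ) - 1) ^ 2 - (p : ℚ) ^ 2)
      = (-1) ^ k * (Nat.factorial (2 * k) : ℚ) * (Nat.choose n k : ℚ)
          * (Nat.choose (n + k) k : ℚ) * 4 ^ k / (Nat.choose (2 * k) k : ℚ) :=
  BB_identity_general p hp hp2 n hn k
end

section
/- Let p > 2 be prime and n = (p-1)/2. For every integer k with 0 <= k <= n, binomial(n,k)*binomial(n+k,k)*(-1)^k ≡ (binomial(2k,k)^2 / 16^k) * (1 - p^2 * sum over j from 1 to k of 1/(2j-1)^2) (mod p^3), where divisions denote inverses modulo p^3. -/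
/-!
Put `a k = (-1)^k C(n,k) C(n+k,k)`. Since `2n + 1 = p`, the ratio of consecutive terms is
`-(n-k)(n+k+1)/(k+1)^2 = ((2k+1)^2 - p^2) / (4(k+1)^2)`, while `C(2k,k)^2/16^k` has ratio
`(2k+1)^2 / (4(k+1)^2)`. Their quotient `1 - p^2/(2k+1)^2` accumulates, modulo `p^4`, to the factor
`1 - p^2 ∑ 1/(2j-1)^2`. Both sides therefore satisfy the same first-order recurrence, whose leading
coefficient `(k+1)^2` is a unit modulo `p^3` as long as `k < n`.
-/

open Finset

section Recurrence

variable {R : Type*} [CommRing R]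

theorem eq_of_mul_succ_eq_of_isUnit {f g u v : ℕ → R} {N : ℕ} (h0 : f 0 = g 0)
    (hu : ∀ k < N, IsUnit (u k)) (hf : ∀ k < N, u k * f (k + 1) = v k * f k)
    (hg : ∀ k < N, u k * g (k + 1) = v k * g k) : ∀ k ≤ N, f k = g k := by
  intro k hk
  induction k with
  | zero => exact h0
  | succ k ih =>
    have hkN : k < N := hk
    apply (hu k hkN).mul_left_cancel
    rw [hf k hkN, hg k hkN, ih hkN.le]

theorem natCast_choose_succ_mul (n k : ℕ) :
    (n.choose (k + 1) : R) * (k + 1) = n.choose k * ((n : R) - k) := by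
  rcases le_or_gt k n with hk | hk
  · have h := congrArg (Nat.cast (R := R)) (Nat.choose_succ_right_eq n k)
    push_cast [Nat.cast_sub hk] at h
    exact h
  · simp [Nat.choose_eq_zero_of_lt hk, Nat.choose_eq_zero_of_lt (hk.trans (Nat.lt_succ_self k))]

theorem sq_succ_mul_choose_mul_choose_succ (n k : ℕ) :
    ((k : R) + 1) ^ 2 * (16 ^ (k + 1) *
        ((n.choose (k + 1) : R) * ((n + (k + 1)).choose (k + 1) : R) * (-1) ^ (k + 1)))
      = 4 * ((2 * (k : R) + 1) ^ 2 - (2 * (n : R) + 1) ^ 2) *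
        (16 ^ k * ((n.choose k : R) * ((n + k).choose k : R) * (-1) ^ k)) := by
  have h₁ := natCast_choose_succ_mul (R := R) n k
  have h₂ : ((n + (k + 1)).choose (k + 1) : R) * (k + 1) = (n + k + 1) * (n + k).choose k := by
    rw [← add_assoc]
    exact_mod_cast congrArg (Nat.cast (R := R)) (Nat.add_one_mul_choose_eq (n + k) k).symm
  linear_combination (16 ^ (k + 1) * (-1) ^ (k + 1) * ((n + (k + 1)).choose (k + 1) : R) *
      (k + 1)) * h₁ + (16 ^ (k + 1) * (-1) ^ (k + 1) * (n.choose k : R) * ((n : R) - k)) * h₂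

theorem sq_succ_mul_centralBinom_sq (k : ℕ) :
    ((k : R) + 1) ^ 2 * ((2 * (k + 1)).choose (k + 1) : R) ^ 2
      = 4 * (2 * (k : R) + 1) ^ 2 * ((2 * k).choose k : R) ^ 2 := by
  have h : ((k : R) + 1) * ((2 * (k + 1)).choose (k + 1) : R)
      = 2 * (2 * k + 1) * ((2 * k).choose k : R) := by
    have := Nat.succ_mul_centralBinom_succ k
    simp only [Nat.centralBinom] at this
    exact_mod_cast congrArg (Nat.cast (R := R)) this
  linear_combination (((k : R) + 1) * ((2 * (k + 1)).choose (k + 1) : R) +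
      2 * (2 * k + 1) * ((2 * k).choose k : R)) * h

end Recurrence

theorem sq_succ_mul_centralBinom_sq_mul_one_sub {N k : ℕ} {ε : ZMod N} (hε : ε ^ 2 = 0)
    (hk : IsUnit ((2 * k + 1 : ℕ) : ZMod N)) :
    ((k : ZMod N) + 1) ^ 2 * (((2 * (k + 1)).choose (k + 1) : ZMod N) ^ 2 *
        (1 - ε * ∑ j ∈ Icc 1 (k + 1), (((2 * j - 1 : ℕ) : ZMod N) ^ 2)⁻¹))
      = 4 * ((2 * (k : ZMod N) + 1) ^ 2 - ε) * (((2 * k).choose k : ZMod N) ^ 2 *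
        (1 - ε * ∑ j ∈ Icc 1 k, (((2 * j - 1 : ℕ) : ZMod N) ^ 2)⁻¹)) := by
  rw [sum_Icc_succ_top (Nat.le_add_left 1 k), show 2 * (k + 1) - 1 = 2 * k + 1 by omega]
  have hinv := ZMod.mul_inv_of_unit _ (hk.pow 2)
  push_cast at hinv ⊢
  linear_combination ((1 - ε * (∑ j ∈ Icc 1 k,
      (((2 * j - 1 : ℕ) : ZMod N) ^ 2)⁻¹ + ((2 * (k : ZMod N) + 1) ^ 2)⁻¹))) *
      sq_succ_mul_centralBinom_sq (R := ZMod N) k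
    - 4 * ε * ((2 * k).choose k : ZMod N) ^ 2 * hinv
    - 4 * ((2 * k).choose k : ZMod N) ^ 2 * (∑ j ∈ Icc 1 k,
      (((2 * j - 1 : ℕ) : ZMod N) ^ 2)⁻¹) * hε

theorem ZMod.isUnit_natCast_of_pos_of_lt_prime {p m : ℕ} (hp : p.Prime) (h0 : 0 < m) (hm : m < p)
    (e : ℕ) : IsUnit (m : ZMod (p ^ e)) :=
  (ZMod.isUnit_iff_coprime m (p ^ e)).mpr <| Nat.Coprime.pow_right e <|
    (Nat.coprime_of_lt_prime h0.ne' hm hp).symm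

theorem BB_plus (p : ℕ) (hp : p.Prime) (hp2 : 2 < p) (n : ℕ) (hn : n = (p - 1) / 2)
    (k : ℕ) (hk : k ≤ n) :
    (Nat.choose n k : ZMod (p ^ 3)) * (Nat.choose (n + k) k : ZMod (p ^ 3)) * (-1) ^ k
      = (Nat.choose (2 * k) k : ZMod (p ^ 3)) ^ 2 * ((16 : ZMod (p ^ 3)) ^ k)⁻¹
          * (1 - (p : ZMod (p ^ 3)) ^ 2
              * ∑ j ∈ Finset.Icc 1 k, (((2 * j - 1 : ℕ) : ZMod (p ^ 3)) ^ 2)⁻¹) := by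
  have hnp : 2 * n + 1 = p := by have := hp.eq_two_or_odd'; grind
  have hP : 2 * (n : ZMod (p ^ 3)) + 1 = p := by rw [← hnp]; push_cast; ring
  have hp4 : ((p : ZMod (p ^ 3)) ^ 2) ^ 2 = 0 := by
    rw [show ((p : ZMod (p ^ 3)) ^ 2) ^ 2 = p * (p ^ 3 : ℕ) by push_cast; ring, ZMod.natCast_self,
      mul_zero]
  have hunit : ∀ m, 0 < m → m < p → IsUnit (m : ZMod (p ^ 3)) := fun m h0 hm ↦
    ZMod.isUnit_natCast_of_pos_of_lt_prime hp h0 hm 3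
  have key := eq_of_mul_succ_eq_of_isUnit (N := n)
    (f := fun k ↦ 16 ^ k * ((n.choose k : ZMod (p ^ 3)) * ((n + k).choose k) * (-1) ^ k))
    (g := fun k ↦ ((2 * k).choose k : ZMod (p ^ 3)) ^ 2 *
      (1 - (p : ZMod (p ^ 3)) ^ 2 * ∑ j ∈ Icc 1 k, (((2 * j - 1 : ℕ) : ZMod (p ^ 3)) ^ 2)⁻¹))
    (u := fun k ↦ ((k : ZMod (p ^ 3)) + 1) ^ 2)
    (v := fun k ↦ 4 * ((2 * (k : ZMod (p ^ 3)) + 1) ^ 2 - (p : ZMod (p ^ 3)) ^ 2))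
    (by simp)
    (fun k _ ↦ by exact_mod_cast (hunit (k + 1) k.succ_pos (by omega)).pow 2)
    (fun k _ ↦ hP ▸ sq_succ_mul_choose_mul_choose_succ n k)
    (fun k _ ↦ sq_succ_mul_centralBinom_sq_mul_one_sub hp4 (hunit _ (by omega) (by omega)))
    k hk
  have h16 : IsUnit (16 : ZMod (p ^ 3)) := by exact_mod_cast (hunit 2 two_pos hp2).pow 4
  have h16k := ZMod.mul_inv_of_unit _ (h16.pow k)
  linear_combination ((16 : ZMod (p ^ 3)) ^ k)⁻¹ * key
    - ((n.choose k : ZMod (p ^ 3)) * ((n + k).choose k) * (-1) ^ k) * h16k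
end
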